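/- Let ψ̃ be a smooth function on ℝ equal to 1 on [1/2, 2] and supported in [1/2 − 1/100, 2 + 1/100], and let φ̃ be a smooth function on ℝ supported in [−M, M] for some M ≥ 1. Define μ̃(ξ₁, η) = μ₂(ξ₁, η) − 1 and, for an integer ℓ with 2^{−ℓ} M < 1/4, define m_ℓ(ξ₁, η) = μ̃(ξ₁, 2^{−ℓ}η) ψ̃(ξ₁) φ̃(η). Then for every N ∈ ℕ there is a constant C_N (depending on N, ψ̃, φ̃ but not on ℓ) such that for all u, v ∈ ℝ, the inverse Fourier transform satisfies |m̌_ℓ(u, v)| ≤ C_N 2^{−ℓ} (1 + |v|)^{−2} (1 + |u|)^{−N}. -/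

import Mathlib

/-! For `ξ > 0` and `η ≥ -ξ` one has `μ₂(ξ, η) = (|ξ + η| - |η|) / ξ = 1 + 2 min(η, 0) / ξ`,
so on the support of `ψ̃ ⊗ φ̃` the symbol is
`m_ℓ(ξ, η) = 2 · 2^{-ℓ} · (ψ̃(ξ) / ξ) · (min(η, 0) φ̃(η))`, and its kernel is `2 · 2^{-ℓ}` times a
product of two one-dimensional inverse Fourier transforms. The first factor is the transform of a
test function, hence rapidly decreasing in `u`. The second is the transform of `min(η, 0) φ̃(η)`,
which is smooth except for a kink at `0`: integrating by parts twice over an interval `[a, 0]`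
gives decay `|v|^{-2}`, and the boundary term `φ̃(0)` allows no more. -/

open MeasureTheory

/-- `μ₂(ξ₁,η) = ∫₀¹ sgn(αξ₁ + η) dα`. -/
noncomputable def mu2 (ξ η : ℝ) : ℝ :=
  ∫ α in Set.Icc (0:ℝ) 1, Real.sign (α * ξ + η)

/-- The inverse Fourier transform `m̌(u,v) = ∫_{ℝ²} e^{2πi(ξ₁u + ηv)} m(ξ₁,η) d(ξ₁,η)`
of a function `m` on `ℝ²`. -/
noncomputable def invFourier2 (m : ℝ × ℝ → ℝ) (u v : ℝ) : ℂ :=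
  ∫ p : ℝ × ℝ,
    Complex.exp (((2 * Real.pi * (p.1 * u + p.2 * v) : ℝ) : ℂ) * Complex.I) * (m p : ℂ)

open Set Function Real Complex
open scoped FourierTransform ContDiff

lemma Real.measurable_sign : Measurable Real.sign :=
  measurable_const.ite measurableSet_Iio (measurable_const.ite measurableSet_Ioi measurable_const)

lemma Real.abs_sign_le_one (r : ℝ) : |Real.sign r| ≤ 1 := by
  rcases Real.sign_apply_eq r with h | h | h <;> simp [h]

lemma Real.sign_eq_signType_sign (r : ℝ) : Real.sign r = (SignType.sign r : ℝ) := by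
  rcases lt_trichotomy r 0 with h | rfl | h
  · simp [Real.sign_of_neg h, h]
  · simp
  · simp [Real.sign_of_pos h, h]

lemma hasDerivAt_abs_mul_add_div {ξ η α : ℝ} (hξ : ξ ≠ 0) (h : α * ξ + η ≠ 0) :
    HasDerivAt (fun α => |α * ξ + η| / ξ) (Real.sign (α * ξ + η)) α := by
  have := ((hasDerivAt_abs h).comp α (((hasDerivAt_id α).mul_const ξ).add_const η)).div_const ξ
  simpa [Real.sign_eq_signType_sign, hξ] using this

theorem mu2_eq_of_ne_zero {ξ : ℝ} (hξ : ξ ≠ 0) (η : ℝ) :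
    mu2 ξ η = (|ξ + η| - |η|) / ξ := by
  have hint : IntervalIntegrable (fun α => Real.sign (α * ξ + η)) volume 0 1 :=
    intervalIntegrable_const (c := (1 : ℝ)).mono_fun
      (Real.measurable_sign.comp (by fun_prop)).aestronglyMeasurable
      (ae_of_all _ fun α => by simpa using Real.abs_sign_le_one _)
  have hderiv : ∀ α ∈ Ioo (0:ℝ) 1 \ {-η / ξ},
      HasDerivAt (fun α => |α * ξ + η| / ξ) (Real.sign (α * ξ + η)) α :=
    fun α hα => hasDerivAt_abs_mul_add_div hξ fun h => hα.2 ((eq_div_iff hξ).mpr (by linarith))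
  rw [mu2, integral_Icc_eq_integral_Ioc, ← intervalIntegral.integral_of_le zero_le_one,
    integral_eq_of_hasDerivAt_off_countable_of_le _ _ zero_le_one
      (countable_singleton (-η / ξ)) (by fun_prop) hderiv hint]
  simp [sub_div]

theorem mu2_sub_one_eq {ξ η : ℝ} (hξ : 0 < ξ) (hη : -ξ ≤ η) :
    mu2 ξ η - 1 = 2 * min η 0 / ξ := by
  rw [mu2_eq_of_ne_zero hξ.ne', abs_of_nonneg (by linarith)]
  rcases le_total η 0 with h | h
  · rw [abs_of_nonpos h, min_eq_left h]; field_simp; ring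
  · rw [abs_of_nonneg h, min_eq_right h]; field_simp; ring

theorem mu2_sub_one_mul_mul_eq {ψ φ : ℝ → ℝ} {r M c : ℝ} (hr : 0 < r) (hc : 0 ≤ c)
    (hcM : c * M ≤ r) (hψ : support ψ ⊆ Ici r) (hφ : support φ ⊆ Icc (-M) M) (ξ η : ℝ) :
    (mu2 ξ (c * η) - 1) * ψ ξ * φ η = 2 * c * (ψ ξ / ξ * (min η 0 * φ η)) := by
  by_cases hψξ : ψ ξ = 0
  · simp [hψξ]
  by_cases hφη : φ η = 0
  · simp [hφη]
  have hξ : r ≤ ξ := hψ hψξ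
  have hη : -M ≤ η := (hφ hφη).1
  rw [mu2_sub_one_eq (by linarith) (by nlinarith),
    show min (c * η) 0 = c * min η 0 by rw [mul_min_of_nonneg _ _ hc, mul_zero]]
  field_simp

theorem invFourier2_const_mul (k : ℝ) (m : ℝ × ℝ → ℝ) (u v : ℝ) :
    invFourier2 (fun p => k * m p) u v = k * invFourier2 m u v := by
  simp only [invFourier2, ofReal_mul, ← integral_const_mul]
  congr 1
  ext p
  ring

theorem invFourier2_mul (f g : ℝ → ℝ) (u v : ℝ) :
    invFourier2 (fun p => f p.1 * g p.2) u v =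
      𝓕⁻ (fun x => (f x : ℂ)) u * 𝓕⁻ (fun y => (g y : ℂ)) v := by
  simp only [invFourier2, Real.fourierInv_eq', RCLike.inner_apply, conj_trivial, smul_eq_mul]
  rw [Measure.volume_eq_prod, ← integral_prod_mul]
  congr 1
  ext p
  rw [← mul_mul_mul_comm, ← Complex.exp_add]
  push_cast
  ring_nf

theorem HasCompactSupport.exists_norm_fourierInv_le
    {V E : Type*} [NormedAddCommGroup V] [InnerProductSpace ℝ V] [FiniteDimensional ℝ V]
    [MeasurableSpace V] [BorelSpace V] [NormedAddCommGroup E] [NormedSpace ℂ E] [CompleteSpace E]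
    {f : V → E} (hc : HasCompactSupport f) (hf : ContDiff ℝ ∞ f) (N : ℕ) :
    ∃ C, 0 < C ∧ ∀ w, ‖𝓕⁻ f w‖ ≤ C / (1 + ‖w‖) ^ N := by
  set S := 𝓕⁻ (hc.toSchwartzMap hf)
  set C := 2 ^ N * (Finset.Iic (N, 0)).sup (fun m => SchwartzMap.seminorm ℂ m.1 m.2) S
  refine ⟨C + 1, by positivity, fun w => ?_⟩
  have hS : 𝓕⁻ f w = S w := by rw [SchwartzMap.fourierInv_coe]; rfl
  have := SchwartzMap.one_add_le_sup_seminorm_apply (𝕜 := ℂ) (m := (N, 0)) le_rfl le_rfl S w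
  rw [norm_iteratedFDeriv_zero] at this
  rw [hS, le_div_iff₀' (by positivity)]
  linarith

theorem ContDiff.div_of_ne_zero_on_tsupport {𝕜 E : Type*} [NontriviallyNormedField 𝕜]
    [NormedAddCommGroup E] [NormedSpace 𝕜 E] {f g : E → 𝕜} {n : WithTop ℕ∞}
    (hf : ContDiff 𝕜 n f) (hg : ContDiff 𝕜 n g) (h : ∀ x ∈ tsupport f, g x ≠ 0) :
    ContDiff 𝕜 n fun x => f x / g x := by
  refine contDiff_iff_contDiffAt.mpr fun x => ?_
  by_cases hx : x ∈ tsupport f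
  · exact hf.contDiffAt.div hg.contDiffAt (h x hx)
  · refine (contDiffAt_const (c := (0 : 𝕜))).congr_of_eventuallyEq ?_
    filter_upwards [notMem_tsupport_iff_eventuallyEq.mp hx] with y hy
    simp [hy]

theorem exists_norm_fourierInv_div_self_le {ψ : ℝ → ℝ} (hψ : ContDiff ℝ ∞ ψ)
    (hc : HasCompactSupport ψ) (h0 : (0 : ℝ) ∉ tsupport ψ) (N : ℕ) :
    ∃ C, 0 < C ∧ ∀ u, ‖𝓕⁻ (fun ξ => ((ψ ξ / ξ : ℝ) : ℂ)) u‖ ≤ C / (1 + |u|) ^ N := by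
  have hdiv : ContDiff ℝ ∞ fun ξ => ψ ξ / ξ :=
    hψ.div_of_ne_zero_on_tsupport contDiff_id fun ξ hξ hξ0 => h0 (hξ0 ▸ hξ)
  have hdivc : HasCompactSupport fun ξ => ((ψ ξ / ξ : ℝ) : ℂ) :=
    hc.mul_right.comp_left ofReal_zero
  simpa only [Real.norm_eq_abs] using
    hdivc.exists_norm_fourierInv_le (ofRealCLM.contDiff.comp hdiv) N

lemma Complex.norm_exp_ofReal_mul_I_mul_ofReal (t x : ℝ) : ‖cexp (t * I * x)‖ = 1 := by
  rw [mul_comm (t : ℂ) I, mul_assoc, ← ofReal_mul, norm_exp_I_mul_ofReal]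

theorem intervalIntegral.integral_mul_cexp_mul_eq {f : ℝ → ℂ} (hf : ContDiff ℝ 1 f) {c : ℂ}
    (hc : c ≠ 0) (a b : ℝ) :
    ∫ x in a..b, f x * cexp (c * x) =
      (f b * cexp (c * b) - f a * cexp (c * a)) / c -
        (∫ x in a..b, deriv f x * cexp (c * x)) / c := by
  have hexp (x : ℝ) : HasDerivAt (fun y : ℝ => cexp (c * y) / c) (cexp (c * x)) x := by
    have := (((hasDerivAt_id (x : ℂ)).const_mul c).cexp.div_const c).comp_ofReal
    simpa [hc] using this
  rw [integral_mul_deriv_eq_deriv_mul (fun x _ => (hf.differentiable one_ne_zero x).hasDerivAt)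
    (fun x _ => hexp x) (hf.continuous_deriv_one.intervalIntegrable _ _)
    ((by fun_prop : Continuous fun x : ℝ => cexp (c * x)).intervalIntegrable _ _),
    ← intervalIntegral.integral_div]
  simp only [mul_div_assoc]
  ring

theorem norm_intervalIntegral_mul_cexp_mul_sq_le {f : ℝ → ℂ} (hf : ContDiff ℝ 2 f) {a b K : ℝ}
    (ha : f a = 0) (hb : f b = 0) (hK : ∀ x ∈ uIcc a b, ‖deriv (deriv f) x‖ ≤ K) (t : ℝ) :
    ‖∫ x in a..b, f x * cexp (t * I * x)‖ * t ^ 2 ≤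
      ‖deriv f a‖ + ‖deriv f b‖ + K * |b - a| := by
  rcases eq_or_ne t 0 with rfl | ht
  · have := (norm_nonneg _).trans (hK a left_mem_uIcc)
    rw [zero_pow two_ne_zero, mul_zero]
    positivity
  have hc : (t : ℂ) * I ≠ 0 := by simp [ht]
  have hf' : ContDiff ℝ 1 (deriv f) := hf.deriv'
  have ht' : (t : ℂ) ≠ 0 := ofReal_ne_zero.mpr ht
  have key : (∫ x in a..b, f x * cexp (t * I * x)) * (t : ℂ) ^ 2 =
      deriv f b * cexp (t * I * b) - deriv f a * cexp (t * I * a) -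
        ∫ x in a..b, deriv (deriv f) x * cexp (t * I * x) := by
    rw [intervalIntegral.integral_mul_cexp_mul_eq (hf.of_le (by norm_num)) hc,
      intervalIntegral.integral_mul_cexp_mul_eq hf' hc, ha, hb]
    field_simp
    ring_nf
    simp [I_sq]
  have hL : ‖∫ x in a..b, deriv (deriv f) x * cexp (t * I * x)‖ ≤ K * |b - a| := by
    refine intervalIntegral.norm_integral_le_of_norm_le_const fun x hx => ?_
    rw [norm_mul, norm_exp_ofReal_mul_I_mul_ofReal, mul_one]
    exact hK x (uIoc_subset_uIcc hx)
  calc ‖∫ x in a..b, f x * cexp (t * I * x)‖ * t ^ 2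
      = ‖(∫ x in a..b, f x * cexp (t * I * x)) * (t : ℂ) ^ 2‖ := by
        rw [norm_mul, norm_pow, norm_real, Real.norm_eq_abs, sq_abs]
    _ ≤ ‖deriv f b‖ + ‖deriv f a‖ + K * |b - a| := by
        rw [key]
        refine (norm_sub_le _ _).trans (add_le_add ((norm_sub_le _ _).trans ?_) hL)
        simp [norm_exp_ofReal_mul_I_mul_ofReal]
    _ = _ := by ring

lemma le_two_mul_add_div_one_add_abs_sq {x A B t : ℝ} (hx : 0 ≤ x) (hxA : x ≤ A)
    (hxB : x * t ^ 2 ≤ B) : x ≤ 2 * (A + B) / (1 + |t|) ^ 2 := by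
  rw [le_div_iff₀ (by positivity)]
  nlinarith [sq_abs t, sq_nonneg (|t| - 1)]

theorem exists_norm_intervalIntegral_mul_cexp_mul_le {f : ℝ → ℂ} (hf : ContDiff ℝ 2 f)
    {a b : ℝ} (ha : f a = 0) (hb : f b = 0) :
    ∃ C, 0 < C ∧ ∀ t : ℝ, ‖∫ x in a..b, f x * cexp (t * I * x)‖ ≤ C / (1 + |t|) ^ 2 := by
  have hab : IsCompact (uIcc a b) := isCompact_uIcc
  obtain ⟨K₀, hK₀⟩ := hab.exists_bound_of_continuousOn hf.continuous.continuousOn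
  obtain ⟨K₂, hK₂⟩ :=
    hab.exists_bound_of_continuousOn hf.deriv'.continuous_deriv_one.continuousOn
  have hK₀0 : 0 ≤ K₀ := (norm_nonneg _).trans (hK₀ a left_mem_uIcc)
  have hK₂0 : 0 ≤ K₂ := (norm_nonneg _).trans (hK₂ a left_mem_uIcc)
  set A := K₀ * |b - a|
  set B := ‖deriv f a‖ + ‖deriv f b‖ + K₂ * |b - a|
  refine ⟨2 * (A + B) + 1, by positivity, fun t => ?_⟩
  have hA : ‖∫ x in a..b, f x * cexp (t * I * x)‖ ≤ A := by
    refine intervalIntegral.norm_integral_le_of_norm_le_const fun x hx => ?_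
    rw [norm_mul, norm_exp_ofReal_mul_I_mul_ofReal, mul_one]
    exact hK₀ x (uIoc_subset_uIcc hx)
  refine (le_two_mul_add_div_one_add_abs_sq (norm_nonneg _) hA
    (norm_intervalIntegral_mul_cexp_mul_sq_le hf ha hb hK₂ t)).trans ?_
  gcongr
  linarith

theorem exists_norm_fourierInv_min_mul_le {φ : ℝ → ℝ} (hφ : ContDiff ℝ 2 φ)
    (hc : HasCompactSupport φ) :
    ∃ C, 0 < C ∧ ∀ v, ‖𝓕⁻ (fun η => ((min η 0 * φ η : ℝ) : ℂ)) v‖ ≤ C / (1 + |v|) ^ 2 := by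
  obtain ⟨a, ha, hφa⟩ : ∃ a < 0, ∀ x ≤ a, φ x = 0 := by
    obtain ⟨a₀, ha₀⟩ := hc.isCompact.bddBelow
    refine ⟨min (-1) (a₀ - 1), by simp,
      fun x hx => image_eq_zero_of_notMem_tsupport fun hx' => ?_⟩
    linarith [ha₀ hx', min_le_right (-1) (a₀ - 1)]
  set f : ℝ → ℂ := fun x => ((x * φ x : ℝ) : ℂ)
  obtain ⟨C, hC, hbound⟩ := exists_norm_intervalIntegral_mul_cexp_mul_le (f := f)
    (ofRealCLM.contDiff.comp (contDiff_id.mul hφ)) (a := a) (b := 0)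
    (by simp [f, hφa a le_rfl]) (by simp [f])
  refine ⟨C, hC, fun v => ?_⟩
  have hrep : 𝓕⁻ (fun η => ((min η 0 * φ η : ℝ) : ℂ)) v =
      ∫ x in a..0, f x * cexp (↑(2 * π * v) * I * x) := by
    rw [Real.fourierInv_eq', intervalIntegral.integral_of_le ha.le,
      ← setIntegral_eq_integral_of_forall_compl_eq_zero (s := Ioc a 0) fun x hx => ?_]
    · refine setIntegral_congr_fun measurableSet_Ioc fun x hx => ?_
      simp only [f, min_eq_left hx.2, smul_eq_mul, RCLike.inner_apply, conj_trivial]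
      push_cast
      ring_nf
    · rcases le_or_gt x a with h | h
      · simp [hφa x h]
      · simp [min_eq_right (lt_of_not_ge fun h' => hx ⟨h, h'⟩).le]
  rw [hrep]
  refine (hbound _).trans (div_le_div_of_nonneg_left hC.le (by positivity) ?_)
  have hv : |v| ≤ |2 * π * v| := by
    rw [abs_mul, abs_of_pos (by positivity : (0:ℝ) < 2 * π)]
    nlinarith [pi_gt_three, abs_nonneg v]
  gcongr

theorem kernel_estimate_m_ell_general
    (ψ φ : ℝ → ℝ) (M : ℝ)
    (hψ : ContDiff ℝ (⊤ : ℕ∞) ψ)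
    (hψsupp : tsupport ψ ⊆ Set.Icc (1/2 - 1/100 : ℝ) (2 + 1/100))
    (hφ : ContDiff ℝ (⊤ : ℕ∞) φ)
    (hφsupp : tsupport φ ⊆ Set.Icc (-M) M) :
    ∀ N : ℕ, ∃ C : ℝ, 0 < C ∧ ∀ ℓ : ℤ, (2:ℝ) ^ (-ℓ) * M < 1/4 → ∀ u v : ℝ,
      ‖invFourier2
          (fun p => (mu2 p.1 ((2:ℝ) ^ (-ℓ) * p.2) - 1) * ψ p.1 * φ p.2) u v‖ ≤
        C * (2:ℝ) ^ (-ℓ) * ((1 + |v|) ^ 2)⁻¹ * ((1 + |u|) ^ N)⁻¹ := by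
  intro N
  have hψc : HasCompactSupport ψ := isCompact_Icc.of_isClosed_subset (isClosed_tsupport ψ) hψsupp
  have hφc : HasCompactSupport φ := isCompact_Icc.of_isClosed_subset (isClosed_tsupport φ) hφsupp
  have hψ0 : (0 : ℝ) ∉ tsupport ψ := fun h => by have := (hψsupp h).1; norm_num at this
  obtain ⟨CA, hCA, hA⟩ := exists_norm_fourierInv_div_self_le hψ hψc hψ0 N
  obtain ⟨CB, hCB, hB⟩ := exists_norm_fourierInv_min_mul_le (hφ.of_le (by norm_cast)) hφc
  refine ⟨2 * CA * CB, by positivity, fun ℓ hℓ u v => ?_⟩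
  have hc : 0 < (2:ℝ) ^ (-ℓ) := by positivity
  simp_rw [mu2_sub_one_mul_mul_eq (r := 1/2 - 1/100) (by norm_num) hc.le (by linarith)
    ((subset_tsupport ψ).trans (hψsupp.trans Icc_subset_Ici_self))
    ((subset_tsupport φ).trans hφsupp)]
  rw [invFourier2_const_mul, invFourier2_mul (fun ξ => ψ ξ / ξ) (fun η => min η 0 * φ η),
    norm_mul, norm_mul, norm_real, Real.norm_eq_abs, abs_of_pos (by positivity)]
  calc 2 * 2 ^ (-ℓ) * (‖𝓕⁻ (fun ξ => ((ψ ξ / ξ : ℝ) : ℂ)) u‖ *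
        ‖𝓕⁻ (fun η => ((min η 0 * φ η : ℝ) : ℂ)) v‖)
      ≤ 2 * 2 ^ (-ℓ) * (CA / (1 + |u|) ^ N * (CB / (1 + |v|) ^ 2)) := by
        gcongr
        exacts [hA u, hB v]
    _ = _ := by ring

/-- **Lemma (kernel estimate for the rescaled symbols `m_ℓ`).** Let `ψ̃` be smooth, equal
to `1` on `[1/2,2]` and supported in `[1/2 - 1/100, 2 + 1/100]`, and let `φ̃` be smooth and
supported in `[-M,M]` with `M ≥ 1`. For an integer `ℓ` with `2^{-ℓ}M < 1/4` set
`m_ℓ(ξ₁,η) = (μ₂(ξ₁, 2^{-ℓ}η) - 1) ψ̃(ξ₁) φ̃(η)`. Then for every `N ∈ ℕ` there is a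
constant `C_N` (independent of `ℓ`) such that
`|m̌_ℓ(u,v)| ≤ C_N 2^{-ℓ} (1+|v|)^{-2} (1+|u|)^{-N}` for all `u,v ∈ ℝ`. -/
theorem kernel_estimate_m_ell
    (ψ φ : ℝ → ℝ) (M : ℝ) (hM : 1 ≤ M)
    (hψ : ContDiff ℝ (⊤ : ℕ∞) ψ)
    (hψone : ∀ x ∈ Set.Icc (1/2 : ℝ) 2, ψ x = 1)
    (hψsupp : tsupport ψ ⊆ Set.Icc (1/2 - 1/100 : ℝ) (2 + 1/100))
    (hφ : ContDiff ℝ (⊤ : ℕ∞) φ)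
    (hφsupp : tsupport φ ⊆ Set.Icc (-M) M) :
    ∀ N : ℕ, ∃ C : ℝ, 0 < C ∧ ∀ ℓ : ℤ, (2:ℝ) ^ (-ℓ) * M < 1/4 → ∀ u v : ℝ,
      ‖invFourier2
          (fun p => (mu2 p.1 ((2:ℝ) ^ (-ℓ) * p.2) - 1) * ψ p.1 * φ p.2) u v‖ ≤
        C * (2:ℝ) ^ (-ℓ) * ((1 + |v|) ^ 2)⁻¹ * ((1 + |u|) ^ N)⁻¹ :=
  kernel_estimate_m_ell_general ψ φ M hψ hψsupp hφ hφsupp
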